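/- Let f, g : [0,T] → ℝ be continuous with g(t) > 0 for all t, let x : [0,T] → ℝ^d solve the linear controlled ODE ẋ(t) = f(t)x(t) + u(t) where u : [0,T] → ℝ^d is continuous. Then for any terminal cost Ψ(x) = (1/2)‖x − x†‖² with x† ∈ ℝ^d and control cost (β/2)∫‖u‖², β > 0, the value function V(t,x) = inf_u [Ψ(x_u(T)) + (β/2)∫_t^T ‖u(r)‖² dr] is a quadratic function of x of the form V(t,x) = (1/2) k(t) ‖e^{F(T)−F(t)} x − x†‖² /(1 + k(t) γ(t)) for appropriate scalar functions, and in particular V(t,·) is convex for every t. -/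

import Mathlib

open MeasureTheory

abbrev E (d : ℕ) : Type := EuclideanSpace ℝ (Fin d)

open intervalIntegral Set

lemma primitive_hasDerivAt {Z : Type*} [NormedAddCommGroup Z] [NormedSpace ℝ Z] [CompleteSpace Z]
    {G : ℝ → Z} (hG : Continuous G) (a r : ℝ) :
    HasDerivAt (fun t => ∫ s in a..t, G s) (G r) r :=
  integral_hasDerivAt_right (hG.intervalIntegrable a r)
    (hG.stronglyMeasurableAtFilter _ _) hG.continuousAt

noncomputable def F0 (f : ℝ → ℝ) : ℝ → ℝ := fun t => ∫ s in (0:ℝ)..t, f s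

lemma F0_hasDerivAt {f : ℝ → ℝ} (hf : Continuous f) (r : ℝ) :
    HasDerivAt (F0 f) (f r) r := primitive_hasDerivAt hf 0 r

lemma F0_cont {f : ℝ → ℝ} (hf : Continuous f) : Continuous (F0 f) := by
  have h : Differentiable ℝ (F0 f) := fun r => (F0_hasDerivAt hf r).differentiableAt
  exact h.continuous

/-- Solution construction -/
lemma sol_spec {d : ℕ} {f : ℝ → ℝ} (hf : Continuous f) (u : ℝ → E d) (hu : Continuous u)
    (t : ℝ) (x : E d) :
    ∃ y : ℝ → E d, y t = x ∧ (∀ r : ℝ, HasDerivAt y (f r • y r + u r) r) ∧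
      y = fun r => Real.exp (F0 f r) •
        (Real.exp (-(F0 f t)) • x + ∫ s in t..r, Real.exp (-(F0 f s)) • u s) := by
  set G : ℝ → E d := fun s => Real.exp (-(F0 f s)) • u s with hG
  have hGc : Continuous G := (((F0_cont hf).neg).rexp).smul hu
  refine ⟨_, ?_, ?_, rfl⟩
  · rw [integral_same, add_zero, smul_smul, ← Real.exp_add, add_neg_cancel, Real.exp_zero, one_smul]
  · intro r
    have h1 : HasDerivAt (fun r => Real.exp (F0 f r)) (Real.exp (F0 f r) * f r) r :=
      (F0_hasDerivAt hf r).exp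
    have h2 : HasDerivAt (fun r => (Real.exp (-(F0 f t)) • x + ∫ s in t..r, G s)) (G r) r :=
      ((primitive_hasDerivAt hGc t r).const_add _)
    have := h1.smul h2
    refine this.congr_deriv ?_
    symm
    simp only [hG]
    rw [smul_smul, smul_smul, ← Real.exp_add]
    simp only [add_neg_cancel, Real.exp_zero]
    module

/-- variation of constants identity at T -/
lemma voc {d : ℕ} {f : ℝ → ℝ} (hf : Continuous f) (u : ℝ → E d) (hu : Continuous u)
    {t T : ℝ} (htT : t ≤ T) (x : E d) (y : ℝ → E d) (hyt : y t = x)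
    (hy : ∀ r ∈ Set.Icc t T, HasDerivAt y (f r • y r + u r) r) :
    y T = Real.exp (F0 f T - F0 f t) • x
      + ∫ s in t..T, Real.exp (F0 f T - F0 f s) • u s := by
  set G : ℝ → E d := fun s => Real.exp (-(F0 f s)) • u s with hG
  have hGc : Continuous G := (((F0_cont hf).neg).rexp).smul hu
  set h : ℝ → E d := fun r => Real.exp (-(F0 f r)) • y r - ∫ s in t..r, G s with hh
  have key : ∀ r ∈ Set.Icc t T, h r = h t := by
    apply constant_of_has_deriv_right_zero
    · apply ContinuousOn.sub
      · exact ((((F0_cont hf).neg).rexp).continuousOn).smul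
          (fun r hr => ((hy r hr).continuousAt).continuousWithinAt)
      · apply Continuous.continuousOn
        have h : Differentiable ℝ (fun r => ∫ s in t..r, G s) :=
          fun r => (primitive_hasDerivAt hGc t r).differentiableAt
        exact h.continuous
    · intro r hr
      have hrIcc : r ∈ Set.Icc t T := ⟨hr.1, le_of_lt hr.2⟩
      have h1 : HasDerivAt (fun r => Real.exp (-(F0 f r)))
          (Real.exp (-(F0 f r)) * (-(f r))) r := ((F0_hasDerivAt hf r).neg).exp
      have h2 := (h1.smul (hy r hrIcc)).sub (primitive_hasDerivAt hGc t r)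
      have h0 : Real.exp (-F0 f r) • (f r • y r + u r) + (Real.exp (-F0 f r) * -f r) • y r - G r
          = 0 := by
        simp only [hG, smul_add, smul_smul]
        module
      rw [h0] at h2
      exact h2.hasDerivWithinAt
  have hT := key T ⟨htT, le_rfl⟩
  have ht0 : h t = Real.exp (-(F0 f t)) • x := by
    simp only [hh, integral_same, sub_zero, hyt]
  rw [hh] at hT
  simp only at hT
  rw [integral_same, sub_zero, hyt] at hT
  have hyT : Real.exp (-(F0 f T)) • y T = Real.exp (-(F0 f t)) • x + ∫ s in t..T, G s :=
    sub_eq_iff_eq_add.mp hT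
  have key2 := congrArg (fun z => Real.exp (F0 f T) • z) hyT
  simp only [smul_add, smul_smul, ← Real.exp_add, add_neg_cancel, Real.exp_zero, one_smul] at key2
  simp only [sub_eq_add_neg]
  rw [key2]
  congr 1
  rw [← intervalIntegral.integral_smul]
  apply intervalIntegral.integral_congr
  intro s _
  simp only [hG, smul_smul, ← Real.exp_add]
lemma lb_ineq {a b p S γ β : ℝ} (ha : 0 ≤ a) (hb : 0 ≤ b) (hp : -(a*b) ≤ p) (hS : 0 ≤ S)
    (hγ : 0 ≤ γ) (hβ : 0 < β) (hbS : b^2 ≤ β*γ*S) :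
    1/2*a^2/(1+γ) ≤ 1/2*(a^2 + 2*p + b^2) + β/2*S := by
  rcases eq_or_lt_of_le hγ with h0 | h0
  · rw [← h0] at hbS ⊢
    rw [mul_zero, zero_mul] at hbS
    have hb0 : b = 0 := by nlinarith
    rw [add_zero, div_one]
    nlinarith
  · rw [div_le_iff₀ (by linarith)]
    have key : γ*((1+γ)*(a^2+2*p+b^2+β*S) - a^2)
        = (γ*a-(1+γ)*b)^2 + 2*γ*(1+γ)*(p+a*b) + (1+γ)*(β*γ*S - b^2) := by ring
    have e1 : (0:ℝ) ≤ (γ*a-(1+γ)*b)^2 := sq_nonneg _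
    have e2 : (0:ℝ) ≤ 2*γ*(1+γ)*(p+a*b) :=
      mul_nonneg (by positivity) (by linarith)
    have e3 : (0:ℝ) ≤ (1+γ)*(β*γ*S - b^2) := mul_nonneg (by linarith) (by linarith)
    have e4 : (0:ℝ) ≤ γ*((1+γ)*(a^2+2*p+b^2+β*S) - a^2) := by rw [key]; linarith
    have e5 : (0:ℝ) ≤ (1+γ)*(a^2+2*p+b^2+β*S) - a^2 :=
      nonneg_of_mul_nonneg_right e4 h0
    linarith

lemma discr {b I S : ℝ} (hI : 0 ≤ I) (hS : 0 ≤ S) (hb : 0 ≤ b)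
    (h : ∀ X : ℝ, 0 ≤ X → 2*X*b ≤ X^2*I + S) : b^2 ≤ I*S := by
  rcases eq_or_lt_of_le hI with h0 | h0
  · have hb0 : b = 0 := by
      by_contra hne
      have hbpos : 0 < b := lt_of_le_of_ne hb (Ne.symm hne)
      have := h ((S+1)/(2*b)) (by positivity)
      rw [← h0] at this
      have h2 : (S+1)/(2*b)*(2*b) = S+1 := div_mul_cancel₀ _ (by positivity)
      nlinarith
    nlinarith
  · have h1 := h (b/I) (div_nonneg hb h0.le)
    have e : 2*(b/I)*b = 2*(b^2/I) := by ring
    have e2 : (b/I)^2*I = b^2/I := by field_simp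
    rw [e, e2] at h1
    have h4 : b^2/I ≤ S := by linarith
    have h5 := mul_le_mul_of_nonneg_right h4 h0.le
    rw [div_mul_cancel₀ _ (ne_of_gt h0)] at h5
    linarith [h5, mul_comm S I]
lemma convex_quad (d : ℕ) (c : ℝ) (xd : E d) (C : ℝ) (hC : 0 ≤ C) :
    ConvexOn ℝ Set.univ (fun x : E d => C * ‖c • x - xd‖^2) := by
  refine ⟨convex_univ, fun x _ y _ a b ha hb hab => ?_⟩
  simp only [smul_eq_mul]
  have key : c • (a • x + b • y) - xd = a • (c • x - xd) + b • (c • y - xd) := by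
    have hxd : xd = (a+b) • xd := by rw [hab, one_smul]
    conv_lhs => rw [hxd]
    module
  rw [key]
  set p := c • x - xd
  set q := c • y - xd
  have h1 : ‖a • p + b • q‖ ≤ a*‖p‖ + b*‖q‖ := by
    calc ‖a • p + b • q‖ ≤ ‖a • p‖ + ‖b • q‖ := norm_add_le _ _
    _ = a*‖p‖ + b*‖q‖ := by
        rw [norm_smul, norm_smul, Real.norm_eq_abs, Real.norm_eq_abs, abs_of_nonneg ha,
          abs_of_nonneg hb]
  have h2 : ‖a • p + b • q‖^2 ≤ a*‖p‖^2 + b*‖q‖^2 := by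
    nlinarith [norm_nonneg (a • p + b • q), norm_nonneg p, norm_nonneg q,
      sq_nonneg (‖p‖ - ‖q‖), mul_nonneg ha hb]
  have h3 := mul_le_mul_of_nonneg_left h2 hC
  linarith [h3]

/-- for the scalar-drift linear-quadratic specialization, the value function
is a quadratic of the stated form in `x`, and in particular `x ↦ V(t,x)` is convex. -/
theorem stmt16 (d : ℕ) (T β : ℝ) (hT : 0 < T) (hβ : 0 < β)
    (f g : ℝ → ℝ) (hf : Continuous f) (hgc : Continuous g)
    (hg : ∀ t, 0 < g t)
    (xd : E d)
    (F : ℝ → ℝ) (hF : ∀ t, F t = ∫ s in (0 : ℝ)..t, f s)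
    (V : ℝ → E d → ℝ)
    (hV : ∀ t x, V t x = sInf {c : ℝ | ∃ (u : ℝ → E d) (y : ℝ → E d),
      Continuous u ∧ y t = x ∧
      (∀ r ∈ Set.Icc t T, HasDerivAt y (f r • y r + u r) r) ∧
      c = 1 / 2 * ‖y T - xd‖ ^ 2 + β / 2 * ∫ r in t..T, ‖u r‖ ^ 2}) :
    ∀ t ∈ Set.Icc (0 : ℝ) T,
      (∃ k γ : ℝ, ∀ x : E d,
        V t x = 1 / 2 * k * ‖Real.exp (F T - F t) • x - xd‖ ^ 2 / (1 + k * γ)) ∧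
      ConvexOn ℝ Set.univ (fun x => V t x) := by
  intro t ht
  have hFF : F = F0 f := funext hF
  set I : ℝ := ∫ s in t..T, Real.exp (F0 f T - F0 f s)^2 with hIdef
  have hI0 : 0 ≤ I := intervalIntegral.integral_nonneg ht.2 (fun s _ => sq_nonneg _)
  set γ : ℝ := I / β with hγdef
  have hγ0 : 0 ≤ γ := div_nonneg hI0 hβ.le
  have h1γ : (0:ℝ) < 1 + γ := by linarith
  have hβγ : β * γ = I := by rw [hγdef]; field_simp
  set c0 : ℝ := Real.exp (F0 f T - F0 f t) with hc0
  have hφc : Continuous (fun s => Real.exp (F0 f T - F0 f s)) :=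
    Real.continuous_exp.comp (continuous_const.sub (F0_cont hf))
  have key : ∀ x : E d, V t x = 1/2 * ‖c0 • x - xd‖^2 / (1 + γ) := by
    intro x
    rw [hV]
    apply IsLeast.csInf_eq
    constructor
    · -- membership: optimal control
      set w : E d := c0 • x - xd with hw
      set a : E d := (-(1/(β*(1+γ)))) • w with ha
      set u : ℝ → E d := fun r => Real.exp (F0 f T - F0 f r) • a with hu
      have huc : Continuous u := hφc.smul continuous_const
      obtain ⟨y, hyt, hyd, _⟩ := sol_spec hf u huc t x
      refine ⟨u, y, huc, hyt, fun r _ => hyd r, ?_⟩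
      have hyT := voc hf u huc ht.2 x y hyt (fun r _ => hyd r)
      have hm : (∫ s in t..T, Real.exp (F0 f T - F0 f s) • u s) = I • a := by
        rw [hIdef, ← intervalIntegral.integral_smul_const]
        apply intervalIntegral.integral_congr
        intro s _
        simp only [hu, smul_smul, ← sq]
      rw [← hc0, hm] at hyT
      have hyTx : y T - xd = (1/(1+γ)) • w := by
        rw [hyT, ha, smul_smul]
        have hcoef : I * -(1/(β*(1+γ))) = -(γ/(1+γ)) := by
          rw [← hβγ]; field_simp
        rw [hcoef, hw]
        match_scalars <;> field_simp <;> try ring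
      have hucost : (∫ r in t..T, ‖u r‖^2) = I * ‖a‖^2 := by
        rw [hIdef, ← intervalIntegral.integral_mul_const]
        apply intervalIntegral.integral_congr
        intro s _
        simp only [hu]
        rw [norm_smul, Real.norm_eq_abs, abs_of_pos (Real.exp_pos _), mul_pow]
      have hna : ‖a‖^2 = (1/(β*(1+γ)))^2 * ‖w‖^2 := by
        rw [ha, norm_smul, Real.norm_eq_abs, abs_neg, abs_of_pos (by positivity), mul_pow]
      have hnyT : ‖y T - xd‖^2 = (1/(1+γ))^2 * ‖w‖^2 := by
        rw [hyTx, norm_smul, Real.norm_eq_abs, abs_of_pos (by positivity), mul_pow]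
      rw [hnyT, hucost, hna, ← hβγ]
      field_simp
    · -- lower bound
      rintro c ⟨u, y, huc, hyt, hyd, rfl⟩
      have hyT := voc hf u huc ht.2 x y hyt hyd
      set w : E d := c0 • x - xd with hw
      set m : E d := ∫ s in t..T, Real.exp (F0 f T - F0 f s) • u s with hmdef
      set S : ℝ := ∫ r in t..T, ‖u r‖^2 with hSdef
      have hS0 : 0 ≤ S := intervalIntegral.integral_nonneg ht.2 (fun s _ => sq_nonneg _)
      have hX : ∀ X : ℝ, 0 ≤ X → 2*X*‖m‖ ≤ X^2*I + S := by
        intro X hX0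
        have h1 : ‖m‖ ≤ ∫ s in t..T, Real.exp (F0 f T - F0 f s) * ‖u s‖ := by
          calc ‖m‖ ≤ ∫ s in t..T, ‖Real.exp (F0 f T - F0 f s) • u s‖ :=
            intervalIntegral.norm_integral_le_integral_norm ht.2
          _ = _ := intervalIntegral.integral_congr (fun s _ => by
              rw [norm_smul, Real.norm_eq_abs, abs_of_pos (Real.exp_pos _)])
        have hc1 : Continuous (fun s => 2*X*(Real.exp (F0 f T - F0 f s) * ‖u s‖)) :=
          continuous_const.mul (hφc.mul huc.norm)
        have hc2 : Continuous (fun s => X^2*Real.exp (F0 f T - F0 f s)^2) :=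
          continuous_const.mul (hφc.pow 2)
        have hc3 : Continuous (fun s : ℝ => ‖u s‖^2) := huc.norm.pow 2
        have h2 : (∫ s in t..T, 2*X*(Real.exp (F0 f T - F0 f s) * ‖u s‖))
            ≤ ∫ s in t..T, (X^2*Real.exp (F0 f T - F0 f s)^2 + ‖u s‖^2) := by
          apply intervalIntegral.integral_mono_on ht.2 (hc1.intervalIntegrable t T)
            ((hc2.add hc3).intervalIntegrable t T)
          intro s _
          simp only [Pi.add_apply]
          nlinarith [sq_nonneg (X*Real.exp (F0 f T - F0 f s) - ‖u s‖)]
        rw [intervalIntegral.integral_const_mul] at h2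
        rw [intervalIntegral.integral_add (hc2.intervalIntegrable t T)
          (hc3.intervalIntegrable t T), intervalIntegral.integral_const_mul] at h2
        have h3 : 2*X*‖m‖ ≤ 2*X*(∫ s in t..T, Real.exp (F0 f T - F0 f s) * ‖u s‖) :=
          mul_le_mul_of_nonneg_left h1 (by linarith)
        calc 2*X*‖m‖ ≤ _ := h3
        _ ≤ X^2*I + S := by rw [hIdef, hSdef]; exact h2
      have hm2 : ‖m‖^2 ≤ I*S := discr hI0 hS0 (norm_nonneg m) hX
      have hyTx : y T - xd = w + m := by
        rw [hyT, hw]; abel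
      rw [hyTx, norm_add_sq_real w m]
      exact lb_ineq (norm_nonneg w) (norm_nonneg m)
        (abs_le.mp (abs_real_inner_le_norm w m)).1 hS0 hγ0 hβ (by rwa [hβγ])
  constructor
  · refine ⟨1, γ, fun x => ?_⟩
    rw [key x, hFF, ← hc0]
    ring
  · have hVeq : (fun x => V t x) = fun x => (1/2/(1+γ)) * ‖c0 • x - xd‖^2 :=
      funext fun x => by rw [key x]; ring
    rw [hVeq]
    exact convex_quad d c0 xd _ (by positivity)
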